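/- arXiv:2605.07698 — 4 statements merged into one kernel-verified Lean document; each statement's English description precedes it below -/
import Mathlib

section
/- Under the non-degeneracy assumption that every prefix w of some string of L with positive p-mass and length less than T satisfies ∑_{y∈A(w)} p(y|w) > 0, the locally projected sequence law μ_proj (defined as the product over t of the masked-renormalized kernels, with each factor taken to be 0 whenever its conditioning prefix has zero p-mass or its token lies outside the valid set) is a probability mass function on V^T, and every x ∈ V^T with μ_proj(x) > 0 belongs to L. -/
open Finset
open scoped Classical

noncomputable section

/-- `w ∈ V^t` is the length-`t` prefix of `x ∈ V^T`. -/
def PrefMatch {V : Type*} {T t : ℕ} (ht : t ≤ T) (w : Fin t → V) (x : Fin T → V) : Prop :=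
  ∀ i : Fin t, x (Fin.castLE ht i) = w i

/-- Mass of the prefix `w` under a law `p` on `V^T`: `Pr_{X∼p}[X_{1:t} = w]`. -/
def prefMass {V : Type*} [Fintype V] {T t : ℕ} (p : (Fin T → V) → ℝ) (ht : t ≤ T)
    (w : Fin t → V) : ℝ :=
  ∑ x : Fin T → V, if PrefMatch ht w x then p x else 0

/-- Conditional next-token probability `p(y | w)`. -/
def condP {V : Type*} [Fintype V] {T t : ℕ} (p : (Fin T → V) → ℝ) (ht : t + 1 ≤ T)
    (w : Fin t → V) (y : V) : ℝ :=
  prefMass p ht (Fin.snoc w y) / prefMass p (Nat.le_of_succ_le ht) w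

/-- Mass of strings of `L` extending prefix `w`: `Pr_{X∼p}[X ∈ L ∧ X_{1:t} = w]`. -/
def lMass {V : Type*} [Fintype V] {T t : ℕ} (p : (Fin T → V) → ℝ)
    (L : Finset (Fin T → V)) (ht : t ≤ T) (w : Fin t → V) : ℝ :=
  ∑ x ∈ L, if PrefMatch ht w x then p x else 0

/-- Future validity `Φ(y | w) = Pr_{X∼p}[X ∈ L | X_{1:t+1} = w·y]` when the
prefix `w·y` has positive `p`-mass, and `0` otherwise. -/
def Phi {V : Type*} [Fintype V] {T t : ℕ} (p : (Fin T → V) → ℝ)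
    (L : Finset (Fin T → V)) (ht : t + 1 ≤ T) (w : Fin t → V) (y : V) : ℝ :=
  if 0 < prefMass p ht (Fin.snoc w y)
  then lMass p L ht (Fin.snoc w y) / prefMass p ht (Fin.snoc w y)
  else 0

/-- The locally valid next-token set `A(w)`. -/
def validSet {V : Type*} [Fintype V] {T t : ℕ} (L : Finset (Fin T → V))
    (ht : t + 1 ≤ T) (w : Fin t → V) : Finset V :=
  Finset.univ.filter (fun y => ∃ x ∈ L, PrefMatch ht (Fin.snoc w y) x)

/-- The locally projected kernel `μ_proj(y | w)`, taken to be `0` whenever the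
conditioning prefix has zero `p`-mass or the token is locally invalid. -/
def projKernel {V : Type*} [Fintype V] {T t : ℕ} (p : (Fin T → V) → ℝ)
    (L : Finset (Fin T → V)) (ht : t + 1 ≤ T) (w : Fin t → V) (y : V) : ℝ :=
  if 0 < prefMass p (Nat.le_of_succ_le ht) w ∧ y ∈ validSet L ht w
  then condP p ht w y / ∑ y' ∈ validSet L ht w, condP p ht w y'
  else 0

/-- The length-`t` prefix of `x`. -/
def pre {V : Type*} {T : ℕ} (x : Fin T → V) (t : ℕ) (ht : t ≤ T) : Fin t → V :=
  fun i => x (Fin.castLE ht i)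

/-- The locally projected sequence law `μ_proj(x) = ∏_t μ_proj(x_{t+1} | x_{1:t})`. -/
def muProj {V : Type*} [Fintype V] {T : ℕ} (p : (Fin T → V) → ℝ)
    (L : Finset (Fin T → V)) (x : Fin T → V) : ℝ :=
  ∏ t : Fin T, projKernel p L t.isLt (pre x t.val (Nat.le_of_lt t.isLt)) (x t)

/-! μ_proj is the law of sequential sampling with the kernels `projKernel`. A factor
`projKernel p L ht w y` can only be positive if `w·y` extends to a string of `L` and has positive
`p`-mass, so every prefix reached with positive probability is of that kind; by non-degeneracy the
kernel at such a prefix is a genuine probability vector. Summing out the last token then shows, by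
induction on the length, that the prefix probabilities sum to one, and a full-length string reached
with positive probability lies in `L`. -/

section PrefixProb

variable {V : Type*} {T : ℕ}

def prefixProb (κ : ∀ t, t + 1 ≤ T → (Fin t → V) → V → ℝ) {t : ℕ} (ht : t ≤ T)
    (w : Fin t → V) : ℝ :=
  ∏ s : Fin t, κ s (s.isLt.trans_le ht) (Fin.take s s.isLt.le w) (w s)

variable {κ : ∀ t, t + 1 ≤ T → (Fin t → V) → V → ℝ}

lemma prefixProb_snoc {t : ℕ} (ht : t + 1 ≤ T) (w : Fin t → V) (y : V) :
    prefixProb κ ht (Fin.snoc w y) = prefixProb κ (Nat.le_of_succ_le ht) w * κ t ht w y := by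
  rw [prefixProb, Fin.prod_univ_castSucc]
  congr 1
  · refine Finset.prod_congr rfl fun _ _ => ?_
    rw [Fin.snoc_castSucc, ← Fin.take_init, Fin.init_snoc]
    rfl
  · simp only [Fin.val_last, Fin.snoc_last]
    rw [← Fin.take_init (h := le_rfl), Fin.init_snoc, Fin.take_eq_self]

lemma prefixProb_nonneg (hκ : ∀ t ht w y, 0 ≤ κ t ht w y) {t : ℕ} (ht : t ≤ T)
    (w : Fin t → V) : 0 ≤ prefixProb κ ht w :=
  Finset.prod_nonneg fun _ _ => hκ _ _ _ _

lemma invariant_of_prefixProb_pos (hκ : ∀ t ht w y, 0 ≤ κ t ht w y)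
    (G : ∀ t, t ≤ T → (Fin t → V) → Prop) (hG₀ : ∀ w, G 0 T.zero_le w)
    (hG : ∀ t (ht : t + 1 ≤ T) w y, G t (Nat.le_of_succ_le ht) w → 0 < κ t ht w y →
      G (t + 1) ht (Fin.snoc w y)) :
    ∀ t (ht : t ≤ T) w, 0 < prefixProb κ ht w → G t ht w := by
  intro t
  induction t with
  | zero => exact fun _ w _ => hG₀ w
  | succ t ih =>
    intro ht w' hw'
    cases w' using Fin.snocCases with
    | snoc w y =>
      rw [prefixProb_snoc] at hw'
      exact hG t ht w y (ih _ w (pos_of_mul_pos_left hw' (hκ _ _ _ _)))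
        (pos_of_mul_pos_right hw' (prefixProb_nonneg hκ _ w))

lemma sum_prefixProb_eq_one [Fintype V] (hκ : ∀ t ht w y, 0 ≤ κ t ht w y)
    (hκ_sum : ∀ t (ht : t + 1 ≤ T) w, 0 < prefixProb κ (Nat.le_of_succ_le ht) w →
      ∑ y, κ t ht w y = 1) :
    ∀ t (ht : t ≤ T), ∑ w, prefixProb κ ht w = 1 := by
  intro t
  induction t with
  | zero => simp [prefixProb]
  | succ t ih =>
    intro ht
    have hsum_y : ∀ w,
        ∑ y, prefixProb κ ht (Fin.snoc w y) = prefixProb κ (Nat.le_of_succ_le ht) w := by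
      intro w
      simp only [prefixProb_snoc, ← Finset.mul_sum]
      rcases (prefixProb_nonneg hκ (Nat.le_of_succ_le ht) w).eq_or_lt with hw | hw
      · rw [← hw, zero_mul]
      · rw [hκ_sum t ht w hw, mul_one]
    rw [← (Fin.snocEquiv fun _ => V).sum_comp, Fintype.sum_prod_type_right]
    exact (Finset.sum_congr rfl fun w _ => hsum_y w).trans (ih _)

end PrefixProb

lemma prefMatch_refl_iff {V : Type*} {T : ℕ} {w x : Fin T → V} :
    PrefMatch le_rfl w x ↔ x = w :=
  funext_iff.symm

section Projection

variable {V : Type*} [Fintype V] {T : ℕ} {p : (Fin T → V) → ℝ}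

lemma prefMass_nonneg (hp0 : ∀ x, 0 ≤ p x) {t : ℕ} (ht : t ≤ T) (w : Fin t → V) :
    0 ≤ prefMass p ht w :=
  Finset.sum_nonneg fun x _ => by split_ifs <;> simp [hp0 x]

lemma condP_nonneg (hp0 : ∀ x, 0 ≤ p x) {t : ℕ} (ht : t + 1 ≤ T) (w : Fin t → V) (y : V) :
    0 ≤ condP p ht w y :=
  div_nonneg (prefMass_nonneg hp0 _ _) (prefMass_nonneg hp0 _ _)

lemma projKernel_nonneg (hp0 : ∀ x, 0 ≤ p x) (L : Finset (Fin T → V)) {t : ℕ}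
    (ht : t + 1 ≤ T) (w : Fin t → V) (y : V) : 0 ≤ projKernel p L ht w y := by
  unfold projKernel
  split_ifs
  · exact div_nonneg (condP_nonneg hp0 _ _ _) (Finset.sum_nonneg fun _ _ => condP_nonneg hp0 _ _ _)
  · exact le_rfl

lemma sum_projKernel_eq_one (L : Finset (Fin T → V)) {t : ℕ} (ht : t + 1 ≤ T) (w : Fin t → V)
    (hw : 0 < prefMass p (Nat.le_of_succ_le ht) w)
    (hA : 0 < ∑ y ∈ validSet L ht w, condP p ht w y) :
    ∑ y, projKernel p L ht w y = 1 := by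
  simp only [projKernel, hw, true_and]
  rw [Finset.sum_ite_mem, Finset.univ_inter, ← Finset.sum_div, div_self hA.ne']

def IsViablePrefix (p : (Fin T → V) → ℝ) (L : Finset (Fin T → V)) {t : ℕ} (ht : t ≤ T)
    (w : Fin t → V) : Prop :=
  (∃ x ∈ L, PrefMatch ht w x) ∧ 0 < prefMass p ht w

lemma isViablePrefix_zero (hp1 : ∑ x, p x = 1) {L : Finset (Fin T → V)} (hL : L.Nonempty)
    (w : Fin 0 → V) : IsViablePrefix p L T.zero_le w := by
  obtain ⟨x, hx⟩ := hL
  refine ⟨⟨x, hx, finZeroElim⟩, ?_⟩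
  simp [prefMass, PrefMatch, hp1]

lemma isViablePrefix_snoc_of_projKernel_pos (hp0 : ∀ x, 0 ≤ p x) {L : Finset (Fin T → V)}
    {t : ℕ} {ht : t + 1 ≤ T} {w : Fin t → V} {y : V} (h : 0 < projKernel p L ht w y) :
    IsViablePrefix p L ht (Fin.snoc w y) := by
  unfold projKernel at h
  split_ifs at h with hwy
  · refine ⟨by simpa [validSet] using hwy.2, ?_⟩
    have hcond : 0 < condP p ht w y :=
      pos_of_mul_pos_left h (inv_nonneg.2 (Finset.sum_nonneg fun _ _ => condP_nonneg hp0 _ _ _))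
    exact pos_of_mul_pos_left hcond (inv_nonneg.2 (prefMass_nonneg hp0 _ _))
  · exact absurd h (lt_irrefl 0)

lemma IsViablePrefix.mem {L : Finset (Fin T → V)} {x : Fin T → V}
    (h : IsViablePrefix p L le_rfl x) : x ∈ L := by
  obtain ⟨x', hx', hxx'⟩ := h.1
  rwa [prefMatch_refl_iff.1 hxx'] at hx'

lemma muProj_eq_prefixProb (L : Finset (Fin T → V)) (x : Fin T → V) :
    muProj p L x = prefixProb (fun _ ht => projKernel p L ht) le_rfl x := rfl

end Projection

theorem stmt1_general {V : Type*} [Fintype V] {T : ℕ}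
    (p : (Fin T → V) → ℝ) (hp0 : ∀ x, 0 ≤ p x) (hp1 : ∑ x, p x = 1)
    (L : Finset (Fin T → V)) (hL : L.Nonempty)
    (hnd : ∀ (t : ℕ) (ht : t + 1 ≤ T) (w : Fin t → V),
      (∃ x ∈ L, PrefMatch (Nat.le_of_succ_le ht) w x) →
      0 < prefMass p (Nat.le_of_succ_le ht) w →
      0 < ∑ y ∈ validSet L ht w, condP p ht w y) :
    (∀ x, 0 ≤ muProj p L x) ∧
    (∑ x, muProj p L x = 1) ∧
    (∀ x, 0 < muProj p L x → x ∈ L) := by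
  simp only [muProj_eq_prefixProb]
  have hκ : ∀ t (ht : t + 1 ≤ T) w y, 0 ≤ projKernel p L ht w y :=
    fun _ ht _ _ => projKernel_nonneg hp0 L ht _ _
  have hviable : ∀ t (ht : t ≤ T) w,
      0 < prefixProb (fun _ ht => projKernel p L ht) ht w → IsViablePrefix p L ht w :=
    invariant_of_prefixProb_pos hκ (fun _ ht => IsViablePrefix p L ht)
      (isViablePrefix_zero hp1 hL) fun _ _ _ _ _ => isViablePrefix_snoc_of_projKernel_pos hp0
  refine ⟨fun x => prefixProb_nonneg hκ le_rfl x, ?_, fun x hx => (hviable T le_rfl x hx).mem⟩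
  refine sum_prefixProb_eq_one hκ (fun t ht w hw => ?_) T le_rfl
  obtain ⟨hwL, hwp⟩ := hviable t _ w hw
  exact sum_projKernel_eq_one L ht w hwp (hnd t ht w hwL hwp)

/-- under the non-degeneracy assumption (every prefix of some
string of `L` that has positive `p`-mass and length less than `T` has positive
locally valid conditional mass), the locally projected sequence law `μ_proj`
is a probability mass function on `V^T` and is supported on `L`. -/
theorem stmt1 {V : Type*} [Fintype V] [Nonempty V] {T : ℕ} (hT : 1 ≤ T)
    (p : (Fin T → V) → ℝ) (hp0 : ∀ x, 0 ≤ p x) (hp1 : ∑ x, p x = 1)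
    (L : Finset (Fin T → V)) (hL : L.Nonempty)
    (hnd : ∀ (t : ℕ) (ht : t + 1 ≤ T) (w : Fin t → V),
      (∃ x ∈ L, PrefMatch (Nat.le_of_succ_le ht) w x) →
      0 < prefMass p (Nat.le_of_succ_le ht) w →
      0 < ∑ y ∈ validSet L ht w, condP p ht w y) :
    (∀ x, 0 ≤ muProj p L x) ∧
    (∑ x, muProj p L x = 1) ∧
    (∀ x, 0 < muProj p L x → x ∈ L) :=
  stmt1_general p hp0 hp1 L hL hnd
end
end

section
/- If there exists δ ≥ 0 with |Φ̂(y) − Φ(y)| ≤ δ for all y ∈ A and δ < Φ̄, then Ẑ ≥ Z_p·(Φ̄ − δ) > 0, so μ̂ is well defined, and TV(μ̂, μ⋆) ≤ δ/(Φ̄ − δ). -/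
open Finset

/-!
Writing `f = p Φ̂` and `g = p Φ`, the hypothesis gives `∑ |f - g| ≤ δ Z_p`, which already
bounds `|Z⋆ - Ẑ|` and hence `Ẑ` from below. For the total variation, split
`f/Ẑ - g/Z⋆ = f (1/Ẑ - 1/Z⋆) + (f - g)/Z⋆`: since `f ≥ 0` the first part sums to
`|Z⋆ - Ẑ|/Z⋆`, so `TV(μ̂, μ⋆) ≤ δ Z_p / Z⋆ = δ/Φ̄ ≤ δ/(Φ̄ - δ)`.
-/

theorem Finset.abs_sum_sub_sum_le {ι : Type*} (s : Finset ι) (f g : ι → ℝ) :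
    |∑ i ∈ s, f i - ∑ i ∈ s, g i| ≤ ∑ i ∈ s, |f i - g i| := by
  rw [← sum_sub_distrib]
  exact abs_sum_le_sum_abs _ _

theorem Finset.sum_abs_mul_sub_mul_le {ι : Type*} (s : Finset ι) (w a b : ι → ℝ) {δ : ℝ}
    (hw : ∀ i ∈ s, 0 ≤ w i) (hab : ∀ i ∈ s, |a i - b i| ≤ δ) :
    ∑ i ∈ s, |w i * a i - w i * b i| ≤ δ * ∑ i ∈ s, w i := by
  rw [mul_sum]
  refine sum_le_sum fun i hi => ?_
  rw [← mul_sub, abs_mul, abs_of_nonneg (hw i hi), mul_comm]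
  exact mul_le_mul_of_nonneg_right (hab i hi) (hw i hi)

theorem Finset.sum_abs_div_sum_sub_div_sum_le {ι : Type*} (s : Finset ι) (f g : ι → ℝ)
    (hf : ∀ i ∈ s, 0 ≤ f i) (hF : 0 < ∑ i ∈ s, f i) (hG : 0 < ∑ i ∈ s, g i) :
    ∑ i ∈ s, |f i / ∑ j ∈ s, f j - g i / ∑ j ∈ s, g j|
      ≤ 2 * (∑ i ∈ s, |f i - g i|) / ∑ i ∈ s, g i := by
  set F := ∑ j ∈ s, f j
  set G := ∑ j ∈ s, g j
  have hsplit : ∀ i ∈ s, |f i / F - g i / G| ≤ f i * |F⁻¹ - G⁻¹| + |f i - g i| / G := by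
    intro i hi
    calc |f i / F - g i / G| = |f i * (F⁻¹ - G⁻¹) + (f i - g i) / G| := by ring_nf
      _ ≤ |f i * (F⁻¹ - G⁻¹)| + |(f i - g i) / G| := abs_add_le _ _
      _ = f i * |F⁻¹ - G⁻¹| + |f i - g i| / G := by
        rw [abs_mul, abs_of_nonneg (hf i hi), abs_div, abs_of_pos hG]
  have hmass : F * |F⁻¹ - G⁻¹| = |F - G| / G :=
    calc F * |F⁻¹ - G⁻¹| = |F * (F⁻¹ - G⁻¹)| := by rw [abs_mul, abs_of_pos hF]
      _ = |(G - F) / G| := by congr 1; field_simp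
      _ = |F - G| / G := by rw [abs_div, abs_of_pos hG, abs_sub_comm]
  calc ∑ i ∈ s, |f i / F - g i / G|
      ≤ ∑ i ∈ s, (f i * |F⁻¹ - G⁻¹| + |f i - g i| / G) := sum_le_sum hsplit
    _ = |F - G| / G + (∑ i ∈ s, |f i - g i|) / G := by
      rw [sum_add_distrib, ← sum_mul, ← sum_div, hmass]
    _ ≤ (∑ i ∈ s, |f i - g i|) / G + (∑ i ∈ s, |f i - g i|) / G := by
      gcongr
      exact abs_sum_sub_sum_le s f g
    _ = 2 * (∑ i ∈ s, |f i - g i|) / G := by ring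

theorem stmt7_general {A : Type*} [Fintype A]
    (p Φ Φhat : A → ℝ) (Zp Zs Φbar Zhat δ : ℝ)
    (hp : ∀ y, 0 ≤ p y) (hZp : Zp = ∑ y, p y) (hZppos : 0 < Zp)
    (hZs : Zs = ∑ y, p y * Φ y) (hZspos : 0 < Zs)
    (hΦbar : Φbar = Zs / Zp)
    (hΦhat0 : ∀ y, 0 ≤ Φhat y) (hZhat : Zhat = ∑ y, p y * Φhat y)
    (hδ0 : 0 ≤ δ) (herr : ∀ y, |Φhat y - Φ y| ≤ δ) (hδ : δ < Φbar) :
    Zp * (Φbar - δ) ≤ Zhat ∧ 0 < Zp * (Φbar - δ) ∧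
    (1/2) * ∑ y, |p y * Φhat y / Zhat - p y * Φ y / Zs| ≤ δ / (Φbar - δ) := by
  have hL1 : ∑ y, |p y * Φhat y - p y * Φ y| ≤ δ * Zp := hZp ▸
    sum_abs_mul_sub_mul_le univ p Φhat Φ (fun y _ => hp y) (fun y _ => herr y)
  have hZp_mul_gap : Zp * (Φbar - δ) = Zs - δ * Zp := by
    rw [hΦbar]; field_simp
  have hZhat_ge : Zp * (Φbar - δ) ≤ Zhat := by
    have := (abs_le.mp ((abs_sum_sub_sum_le univ _ _).trans hL1)).1
    rw [hZp_mul_gap, hZs, hZhat]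
    linarith
  have hpos : 0 < Zp * (Φbar - δ) := mul_pos hZppos (sub_pos.mpr hδ)
  refine ⟨hZhat_ge, hpos, ?_⟩
  have hTV := sum_abs_div_sum_sub_div_sum_le univ (fun y => p y * Φhat y) (fun y => p y * Φ y)
    (fun y _ => mul_nonneg (hp y) (hΦhat0 y)) (hZhat ▸ hpos.trans_le hZhat_ge) (hZs ▸ hZspos)
  rw [← hZhat, ← hZs] at hTV
  calc (1/2) * ∑ y, |p y * Φhat y / Zhat - p y * Φ y / Zs|
      ≤ (1/2) * (2 * (δ * Zp) / Zs) := by gcongr; exact hTV.trans (by gcongr)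
    _ = δ / Φbar := by rw [hΦbar]; field_simp
    _ ≤ δ / (Φbar - δ) := by gcongr; linarith

/-- Φ-approximation fidelity: if `|Φ̂ y − Φ y| ≤ δ` for all `y ∈ A`
and `δ < Φ̄`, then `Ẑ ≥ Z_p·(Φ̄ − δ) > 0` (so `μ̂` is well defined) and
`TV(μ̂, μ⋆) ≤ δ/(Φ̄ − δ)`. -/
theorem stmt7 {A : Type*} [Fintype A] [Nonempty A]
    (p Φ Φhat : A → ℝ) (Zp Zs Φbar Zhat δ : ℝ)
    (hp : ∀ y, 0 ≤ p y) (hZp : Zp = ∑ y, p y) (hZppos : 0 < Zp)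
    (hΦ : ∀ y, 0 ≤ Φ y ∧ Φ y ≤ 1) (hZs : Zs = ∑ y, p y * Φ y) (hZspos : 0 < Zs)
    (hΦbar : Φbar = Zs / Zp)
    (hΦhat0 : ∀ y, 0 ≤ Φhat y) (hZhat : Zhat = ∑ y, p y * Φhat y)
    (hδ0 : 0 ≤ δ) (herr : ∀ y, |Φhat y - Φ y| ≤ δ) (hδ : δ < Φbar) :
    Zp * (Φbar - δ) ≤ Zhat ∧ 0 < Zp * (Φbar - δ) ∧
    (1/2) * ∑ y, |p y * Φhat y / Zhat - p y * Φ y / Zs| ≤ δ / (Φbar - δ) :=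
  stmt7_general p Φ Φhat Zp Zs Φbar Zhat δ hp hZp hZppos hZs hZspos hΦbar hΦhat0 hZhat hδ0 herr hδ
end

section
/- If there exists δ ≥ 0 with |Φ̂(y) − Φ(y)| ≤ δ for all y ∈ A and Ẑ > 0, then for every y ∈ A: |μ̂(y) − μ⋆(y)| ≤ p(y)·(Z⋆·δ + Φ(y)·δ·Z_p) / (Z⋆·Ẑ). -/
open Finset

/-! Write `μ̂ y - μ⋆ y = ((p Φ̂ - p Φ) Z⋆ + p Φ (Z⋆ - Ẑ)) / (Z⋆ Ẑ)`: the first term is controlled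
pointwise by `δ`, the second by `|Z⋆ - Ẑ| ≤ δ Z_p`, since the normalisers are `p`-weighted sums of
functions that differ by at most `δ`. -/

section

variable {K : Type*} [Field K] [LinearOrder K] [IsStrictOrderedRing K]

theorem abs_sum_mul_sub_sum_mul_le {ι : Type*} (s : Finset ι) {w f g : ι → K} {δ : K}
    (hw : ∀ i ∈ s, 0 ≤ w i) (hfg : ∀ i ∈ s, |f i - g i| ≤ δ) :
    |∑ i ∈ s, w i * f i - ∑ i ∈ s, w i * g i| ≤ δ * ∑ i ∈ s, w i := by
  rw [← sum_sub_distrib, mul_sum]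
  refine (abs_sum_le_sum_abs _ _).trans (sum_le_sum fun i hi => ?_)
  rw [← mul_sub, abs_mul, abs_of_nonneg (hw i hi), mul_comm δ]
  exact mul_le_mul_of_nonneg_left (hfg i hi) (hw i hi)

theorem abs_div_sub_div_le {a b Z W : K} (hZ : 0 < Z) (hW : 0 < W) :
    |a / W - b / Z| ≤ (|a - b| * Z + |b| * |Z - W|) / (Z * W) := by
  have hsplit : a / W - b / Z = ((a - b) * Z + b * (Z - W)) / (Z * W) := by
    field_simp
    ring
  rw [hsplit, abs_div, abs_of_pos (mul_pos hZ hW)]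
  gcongr
  calc |(a - b) * Z + b * (Z - W)| ≤ |(a - b) * Z| + |b * (Z - W)| := abs_add_le _ _
    _ = |a - b| * Z + |b| * |Z - W| := by rw [abs_mul, abs_mul, abs_of_pos hZ]

end

theorem stmt9_general {A : Type*} [Fintype A]
    (p Φ Φhat : A → ℝ) (Zp Zs Zhat δ : ℝ)
    (hp : ∀ y, 0 ≤ p y) (hZp : Zp = ∑ y, p y)
    (hΦ : ∀ y, 0 ≤ Φ y ∧ Φ y ≤ 1) (hZs : Zs = ∑ y, p y * Φ y) (hZspos : 0 < Zs)
    (hZhat : Zhat = ∑ y, p y * Φhat y)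
    (herr : ∀ y, |Φhat y - Φ y| ≤ δ) (hZhatpos : 0 < Zhat) :
    ∀ y, |p y * Φhat y / Zhat - p y * Φ y / Zs|
        ≤ p y * (Zs * δ + Φ y * δ * Zp) / (Zs * Zhat) := by
  intro y
  have hnormalisers : |Zs - Zhat| ≤ δ * Zp := by
    rw [abs_sub_comm, hZs, hZhat, hZp]
    exact abs_sum_mul_sub_sum_mul_le _ (fun y _ => hp y) (fun y _ => herr y)
  have hnumerators : |p y * Φhat y - p y * Φ y| ≤ p y * δ := by
    rw [← mul_sub, abs_mul, abs_of_nonneg (hp y)]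
    exact mul_le_mul_of_nonneg_left (herr y) (hp y)
  have hpΦ : 0 ≤ p y * Φ y := mul_nonneg (hp y) (hΦ y).1
  calc |p y * Φhat y / Zhat - p y * Φ y / Zs|
      ≤ (|p y * Φhat y - p y * Φ y| * Zs + |p y * Φ y| * |Zs - Zhat|) / (Zs * Zhat) :=
        abs_div_sub_div_le hZspos hZhatpos
    _ ≤ (p y * δ * Zs + p y * Φ y * (δ * Zp)) / (Zs * Zhat) := by
        rw [abs_of_nonneg hpΦ]
        gcongr
    _ = p y * (Zs * δ + Φ y * δ * Zp) / (Zs * Zhat) := by ring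

/-- pointwise perturbation bound: if `|Φ̂ y − Φ y| ≤ δ` for all
`y ∈ A` and `Ẑ > 0`, then for every `y`,
`|μ̂ y − μ⋆ y| ≤ p y·(Z⋆·δ + Φ y·δ·Z_p)/(Z⋆·Ẑ)`. -/
theorem stmt9 {A : Type*} [Fintype A] [Nonempty A]
    (p Φ Φhat : A → ℝ) (Zp Zs Zhat δ : ℝ)
    (hp : ∀ y, 0 ≤ p y) (hZp : Zp = ∑ y, p y) (hZppos : 0 < Zp)
    (hΦ : ∀ y, 0 ≤ Φ y ∧ Φ y ≤ 1) (hZs : Zs = ∑ y, p y * Φ y) (hZspos : 0 < Zs)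
    (hΦhat0 : ∀ y, 0 ≤ Φhat y) (hZhat : Zhat = ∑ y, p y * Φhat y)
    (hδ0 : 0 ≤ δ) (herr : ∀ y, |Φhat y - Φ y| ≤ δ) (hZhatpos : 0 < Zhat) :
    ∀ y, |p y * Φhat y / Zhat - p y * Φ y / Zs|
        ≤ p y * (Zs * δ + Φ y * δ * Zp) / (Zs * Zhat) :=
  stmt9_general p Φ Φhat Zp Zs Zhat δ hp hZp hΦ hZs hZspos hZhat herr hZhatpos
end

section
/- Fix k ≥ 1 and α ∈ (0,1], and set ε_k = √(ln(2·|A|/α)/(2k)). If ε_k < Φ̄, then with probability at least 1 − α the following hold simultaneously: |Φ̂(y) − Φ(y)| ≤ ε_k for every y ∈ A; Ẑ ≥ Z_p·(Φ̄ − ε_k) > 0 (so μ̂ is well defined); and TV(μ̂, μ⋆) ≤ ε_k/(Φ̄ − ε_k). -/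
/-!
Each `Φ̂ y` is the mean of `k` independent Bernoulli variables, which are `1/4`-sub-Gaussian after
centring (Hoeffding's lemma), so `|Φ̂ y - Φ y| > ε` has probability at most `2 exp (-2 k ε²)`; the
choice of `ε_k` makes this `α / |A|`, and a union bound over `A` leaves probability `≥ 1 - α`.
On that event `|Ẑ - Z⋆| ≤ ε Z_p`, which gives the lower bound on `Ẑ`, and splitting
`p Φ̂ / Ẑ - p Φ / Z⋆ = p (Φ̂ - Φ) / Ẑ + (p Φ / Z⋆) (Z⋆ - Ẑ) / Ẑ` bounds the total variation by
`ε Z_p / Ẑ ≤ ε / (Φ̄ - ε)`.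
-/

open Finset MeasureTheory ProbabilityTheory Real
open scoped NNReal

section Probability

variable {Ω : Type*} [MeasurableSpace Ω] {P : Measure Ω}

lemma measureReal_abs_sum_ge_le_of_iIndepFun [IsFiniteMeasure P] {ι : Type*} {X : ι → Ω → ℝ}
    (h_indep : iIndepFun X P) {c : ι → ℝ≥0} {s : Finset ι}
    (h_subG : ∀ i ∈ s, HasSubgaussianMGF (X i) (c i) P) {ε : ℝ} (hε : 0 ≤ ε) :
    P.real {ω | ε ≤ |∑ i ∈ s, X i ω|} ≤ 2 * exp (-ε ^ 2 / (2 * ∑ i ∈ s, c i)) := by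
  have h_neg : P.real {ω | ε ≤ ∑ i ∈ s, (-X i) ω} ≤ exp (-ε ^ 2 / (2 * ∑ i ∈ s, c i)) :=
    HasSubgaussianMGF.measure_sum_ge_le_of_iIndepFun
      (h_indep.comp (fun _ ↦ Neg.neg) fun _ ↦ measurable_neg) (fun i hi ↦ (h_subG i hi).neg) hε
  calc P.real {ω | ε ≤ |∑ i ∈ s, X i ω|}
      ≤ P.real ({ω | ε ≤ ∑ i ∈ s, X i ω} ∪ {ω | ε ≤ ∑ i ∈ s, (-X i) ω}) := by
        refine measureReal_mono (fun ω hω ↦ ?_)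
        simp only [Set.mem_ofPred_eq, Set.mem_union, Pi.neg_apply, Finset.sum_neg_distrib] at hω ⊢
        rcases le_abs'.mp hω with h | h
        · exact Or.inr (by linarith)
        · exact Or.inl h
    _ ≤ _ := (measureReal_union_le _ _).trans (by
        linarith [HasSubgaussianMGF.measure_sum_ge_le_of_iIndepFun h_indep h_subG hε])

lemma integral_eq_of_eq_zero_or_eq_one {X : Ω → ℝ} (hX : Measurable X)
    (hval : ∀ ω, X ω = 0 ∨ X ω = 1) {q : ℝ} (hq : 0 ≤ q)
    (hmean : P {ω | X ω = 1} = ENNReal.ofReal q) : P[X] = q := by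
  have hind : X = {ω | X ω = 1}.indicator 1 := by
    funext ω
    rcases hval ω with h | h <;> simp [h]
  nth_rw 1 [hind]
  rw [integral_indicator_one (measurableSet_eq_fun hX measurable_const), measureReal_def, hmean,
    ENNReal.toReal_ofReal hq]

lemma hasSubgaussianMGF_sub_of_eq_zero_or_eq_one [IsProbabilityMeasure P] {X : Ω → ℝ}
    (hX : Measurable X) (hval : ∀ ω, X ω = 0 ∨ X ω = 1) {q : ℝ} (hq : 0 ≤ q)
    (hmean : P {ω | X ω = 1} = ENNReal.ofReal q) :
    HasSubgaussianMGF (fun ω ↦ X ω - q) 4⁻¹ P := by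
  have h := hasSubgaussianMGF_of_mem_Icc (μ := P) (a := 0) (b := 1) hX.aemeasurable
    (ae_of_all _ fun ω ↦ by rcases hval ω with h | h <;> simp [h])
  rw [integral_eq_of_eq_zero_or_eq_one hX hval hq hmean] at h
  convert h using 1
  ext; norm_num

lemma measureReal_abs_mean_sub_ge_le_of_eq_zero_or_eq_one [IsProbabilityMeasure P] {ι : Type*}
    [Fintype ι] [Nonempty ι] {X : ι → Ω → ℝ} (h_indep : iIndepFun X P)
    (hX : ∀ i, Measurable (X i)) (hval : ∀ i ω, X i ω = 0 ∨ X i ω = 1) {q : ℝ} (hq : 0 ≤ q)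
    (hmean : ∀ i, P {ω | X i ω = 1} = ENNReal.ofReal q) {ε : ℝ} (hε : 0 ≤ ε) :
    P.real {ω | ε ≤ |(∑ i, X i ω) / Fintype.card ι - q|}
      ≤ 2 * exp (-(2 * Fintype.card ι * ε ^ 2)) := by
  have hn : (0 : ℝ) < Fintype.card ι := by positivity
  have h := measureReal_abs_sum_ge_le_of_iIndepFun (s := univ) (c := fun _ ↦ 4⁻¹)
    (h_indep.comp (fun _ x ↦ x - q) fun _ ↦ measurable_id.sub_const q)
    (fun i _ ↦ hasSubgaussianMGF_sub_of_eq_zero_or_eq_one (hX i) (hval i) hq (hmean i))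
    (mul_nonneg hn.le hε)
  have hevent : ∀ ω, ε ≤ |(∑ i, X i ω) / Fintype.card ι - q|
      ↔ Fintype.card ι * ε ≤ |∑ i, (X i ω - q)| := by
    intro ω
    rw [Finset.sum_sub_distrib, Finset.sum_const, Finset.card_univ, nsmul_eq_mul,
      show (∑ i, X i ω) / Fintype.card ι - q = (∑ i, X i ω - Fintype.card ι * q) / Fintype.card ι
        by field_simp, abs_div, abs_of_pos hn, le_div_iff₀ hn, mul_comm]
  simp only [hevent]
  refine h.trans_eq ?_
  simp only [Finset.sum_const, Finset.card_univ, nsmul_eq_mul]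
  push_cast
  field_simp
  ring_nf

lemma ofReal_one_sub_le_measure_iInter [IsProbabilityMeasure P] {ι : Type*} [Fintype ι]
    {S : ι → Set Ω} {δ : ℝ} (h : ∀ i, P.real (S i)ᶜ ≤ δ) :
    ENNReal.ofReal (1 - Fintype.card ι * δ) ≤ P (⋂ i, S i) := by
  have hcompl : P.real (⋂ i, S i)ᶜ ≤ Fintype.card ι * δ := by
    rw [Set.compl_iInter]
    calc P.real (⋃ i, (S i)ᶜ) ≤ ∑ i, P.real (S i)ᶜ := measureReal_iUnion_fintype_le _
      _ ≤ ∑ _i : ι, δ := Finset.sum_le_sum fun i _ ↦ h i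
      _ = Fintype.card ι * δ := by simp
  have hunion : 1 ≤ P.real (⋂ i, S i) + P.real (⋂ i, S i)ᶜ := by
    have := measureReal_union_le (μ := P) (⋂ i, S i) (⋂ i, S i)ᶜ
    rwa [Set.union_compl_self, probReal_univ] at this
  rw [← ofReal_measureReal]
  exact ENNReal.ofReal_le_ofReal (by linarith)

end Probability

section Reweighting

variable {A : Type*} [Fintype A] {p f g : A → ℝ} {ε : ℝ}

lemma abs_sum_mul_sub_sum_mul_le_s16 (hp : ∀ y, 0 ≤ p y) (hfg : ∀ y, |f y - g y| ≤ ε) :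
    |∑ y, p y * f y - ∑ y, p y * g y| ≤ ε * ∑ y, p y := by
  rw [← Finset.sum_sub_distrib, Finset.mul_sum]
  refine (Finset.abs_sum_le_sum_abs _ _).trans (Finset.sum_le_sum fun y _ ↦ ?_)
  rw [← mul_sub, abs_mul, abs_of_nonneg (hp y), mul_comm]
  exact mul_le_mul_of_nonneg_right (hfg y) (hp y)

lemma sum_abs_div_sum_sub_div_sum_le (hp : ∀ y, 0 ≤ p y) (hg : ∀ y, 0 ≤ g y)
    (hfg : ∀ y, |f y - g y| ≤ ε) (hZf : 0 < ∑ y, p y * f y) (hZg : 0 < ∑ y, p y * g y) :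
    ∑ y, |p y * f y / ∑ d, p d * f d - p y * g y / ∑ d, p d * g d|
      ≤ 2 * ε * (∑ y, p y) / ∑ y, p y * f y := by
  set Zf := ∑ y, p y * f y
  set Zg := ∑ y, p y * g y
  have hterm : ∀ y, |p y * f y / Zf - p y * g y / Zg|
      ≤ p y * ε / Zf + p y * g y / Zg * (|Zg - Zf| / Zf) := by
    intro y
    have hsplit : p y * f y / Zf - p y * g y / Zg
        = p y * (f y - g y) / Zf + p y * g y / Zg * ((Zg - Zf) / Zf) := by
      field_simp
      ring
    rw [hsplit]
    refine (abs_add_le _ _).trans (add_le_add ?_ ?_)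
    · rw [abs_div, abs_mul, abs_of_nonneg (hp y), abs_of_pos hZf]
      gcongr
      · exact hp y
      · exact hfg y
    · rw [abs_mul, abs_div _ Zf, abs_of_pos hZf,
        abs_of_nonneg (div_nonneg (mul_nonneg (hp y) (hg y)) hZg.le)]
  calc ∑ y, |p y * f y / Zf - p y * g y / Zg|
      ≤ ∑ y, (p y * ε / Zf + p y * g y / Zg * (|Zg - Zf| / Zf)) :=
        Finset.sum_le_sum fun y _ ↦ hterm y
    _ = ε * (∑ y, p y) / Zf + |Zf - Zg| / Zf := by
        rw [Finset.sum_add_distrib, ← Finset.sum_div, ← Finset.sum_mul, ← Finset.sum_mul,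
          ← Finset.sum_div, div_self hZg.ne', abs_sub_comm]
        ring
    _ ≤ ε * (∑ y, p y) / Zf + ε * (∑ y, p y) / Zf := by
        gcongr
        exact abs_sum_mul_sub_sum_mul_le_s16 hp hfg
    _ = 2 * ε * (∑ y, p y) / Zf := by ring

lemma reweighting_bounds_of_abs_sub_le {Φ : A → ℝ} {Zp Zs Φbar : ℝ} (hp : ∀ y, 0 ≤ p y)
    (hΦ : ∀ y, 0 ≤ Φ y) (hZp : Zp = ∑ y, p y) (hZppos : 0 < Zp) (hZs : Zs = ∑ y, p y * Φ y)
    (hΦbar : Φbar = Zs / Zp) (hε : 0 ≤ ε) (hεΦ : ε < Φbar) (hf : ∀ y, |f y - Φ y| ≤ ε) :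
    (Zp * (Φbar - ε) ≤ ∑ y, p y * f y ∧ 0 < Zp * (Φbar - ε)) ∧
      (1 / 2) * ∑ y, |p y * f y / (∑ d, p d * f d) - p y * Φ y / Zs| ≤ ε / (Φbar - ε) := by
  have hgap : 0 < Zp * (Φbar - ε) := mul_pos hZppos (by linarith)
  have hlower : Zp * (Φbar - ε) ≤ ∑ y, p y * f y := by
    have hZs' : Zp * (Φbar - ε) = Zs - ε * Zp := by
      rw [hΦbar]
      field_simp
    have := abs_sum_mul_sub_sum_mul_le_s16 hp hf
    rw [← hZp, ← hZs] at this
    linarith [abs_le.mp this]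
  have hZspos : 0 < ∑ y, p y * Φ y := by
    rw [← hZs, ← div_pos_iff_of_pos_right hZppos, ← hΦbar]
    linarith
  refine ⟨⟨hlower, hgap⟩, ?_⟩
  calc (1 / 2) * ∑ y, |p y * f y / (∑ d, p d * f d) - p y * Φ y / Zs|
      ≤ (1 / 2) * (2 * ε * Zp / ∑ y, p y * f y) := by
        rw [hZs, hZp]
        gcongr
        exact sum_abs_div_sum_sub_div_sum_le hp hΦ hf (hgap.trans_le hlower) hZspos
    _ = ε * Zp / ∑ y, p y * f y := by ring
    _ ≤ ε * Zp / (Zp * (Φbar - ε)) := by gcongr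
    _ = ε / (Φbar - ε) := by rw [mul_comm ε, mul_div_mul_left _ _ hZppos.ne']

end Reweighting

theorem stmt16_general {A : Type*} [Fintype A] [Nonempty A]
    {Ω : Type*} [MeasurableSpace Ω] (P : Measure Ω) [IsProbabilityMeasure P]
    (p Φ : A → ℝ) (Zp Zs Φbar : ℝ)
    (hp : ∀ y, 0 ≤ p y) (hZp : Zp = ∑ y, p y) (hZppos : 0 < Zp)
    (hΦ : ∀ y, 0 ≤ Φ y ∧ Φ y ≤ 1) (hZs : Zs = ∑ y, p y * Φ y)
    (hΦbar : Φbar = Zs / Zp)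
    (k : ℕ) (hk : 1 ≤ k) (α : ℝ) (hα0 : 0 < α) (hα1 : α ≤ 1)
    (B : A × Fin k → Ω → ℝ)
    (hBmeas : ∀ i, Measurable (B i))
    (hBind : ProbabilityTheory.iIndepFun B P)
    (hBval : ∀ i ω, B i ω = 0 ∨ B i ω = 1)
    (hBmean : ∀ i, P {ω | B i ω = 1} = ENNReal.ofReal (Φ i.1))
    (Φhat : A → Ω → ℝ)
    (hΦhat : ∀ y ω, Φhat y ω = (1 / (k : ℝ)) * ∑ j : Fin k, B (y, j) ω)
    (εk : ℝ)
    (hεk : εk = Real.sqrt (Real.log (2 * (Fintype.card A : ℝ) / α) / (2 * (k : ℝ))))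
    (hεΦ : εk < Φbar) :
    ENNReal.ofReal (1 - α) ≤
      P {ω | (∀ y, |Φhat y ω - Φ y| ≤ εk) ∧
             (Zp * (Φbar - εk) ≤ ∑ y, p y * Φhat y ω ∧ 0 < Zp * (Φbar - εk)) ∧
             (1/2) * ∑ y, |p y * Φhat y ω / (∑ d, p d * Φhat d ω) - p y * Φ y / Zs|
               ≤ εk / (Φbar - εk)} := by
  have : NeZero k := ⟨by omega⟩
  have hA : (0 : ℝ) < Fintype.card A := by positivity
  have hεk0 : 0 ≤ εk := hεk ▸ Real.sqrt_nonneg _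
  have htail : 2 * exp (-(2 * k * εk ^ 2)) = α / Fintype.card A := by
    have hratio : 1 ≤ 2 * (Fintype.card A : ℝ) / α := by
      rw [le_div_iff₀ hα0]
      linarith [show (1 : ℝ) ≤ Fintype.card A by exact_mod_cast Fintype.card_pos]
    rw [hεk, sq_sqrt (div_nonneg (log_nonneg hratio) (by positivity)),
      mul_div_cancel₀ _ (by positivity), exp_neg, exp_log (by positivity)]
    field_simp
  have hdev : ∀ y, P.real {ω | |Φhat y ω - Φ y| ≤ εk}ᶜ ≤ α / Fintype.card A := by
    intro y
    have h := measureReal_abs_mean_sub_ge_le_of_eq_zero_or_eq_one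
      (hBind.precomp (Prod.mk_right_injective y)) (fun j ↦ hBmeas (y, j))
      (fun j ↦ hBval (y, j)) (hΦ y).1 (fun j ↦ hBmean (y, j)) hεk0
    rw [Fintype.card_fin] at h
    refine (measureReal_mono fun ω hω ↦ ?_).trans (h.trans_eq htail)
    simp only [Set.mem_compl_iff, Set.mem_ofPred_eq, not_le, hΦhat, one_div_mul_eq_div] at hω ⊢
    exact hω.le
  have hgood := ofReal_one_sub_le_measure_iInter hdev
  rw [mul_div_cancel₀ _ hA.ne'] at hgood
  refine hgood.trans (measure_mono fun ω hω ↦ ?_)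
  replace hω : ∀ y, |Φhat y ω - Φ y| ≤ εk := by
    simpa only [Set.mem_iInter, Set.mem_ofPred_eq] using hω
  exact ⟨hω, reweighting_bounds_of_abs_sub_le hp (fun y ↦ (hΦ y).1) hZp hZppos hZs hΦbar hεk0
    hεΦ hω⟩

/-- Monte Carlo estimator guarantee: let `Φ̂(y)` be the average
of `k` i.i.d. Bernoulli(`Φ y`) samples, mutually independent over all `y` and
repetitions, and set `ε_k = √(ln(2|A|/α)/(2k))`. If `ε_k < Φ̄`, then with
probability at least `1 − α`: every `y` satisfies `|Φ̂ y − Φ y| ≤ ε_k`,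
`Ẑ ≥ Z_p·(Φ̄ − ε_k) > 0` (so `μ̂` is well defined), and
`TV(μ̂, μ⋆) ≤ ε_k/(Φ̄ − ε_k)`. -/
theorem stmt16 {A : Type*} [Fintype A] [Nonempty A]
    {Ω : Type*} [MeasurableSpace Ω] (P : Measure Ω) [IsProbabilityMeasure P]
    (p Φ : A → ℝ) (Zp Zs Φbar : ℝ)
    (hp : ∀ y, 0 ≤ p y) (hZp : Zp = ∑ y, p y) (hZppos : 0 < Zp)
    (hΦ : ∀ y, 0 ≤ Φ y ∧ Φ y ≤ 1) (hZs : Zs = ∑ y, p y * Φ y) (hZspos : 0 < Zs)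
    (hΦbar : Φbar = Zs / Zp)
    (k : ℕ) (hk : 1 ≤ k) (α : ℝ) (hα0 : 0 < α) (hα1 : α ≤ 1)
    (B : A × Fin k → Ω → ℝ)
    (hBmeas : ∀ i, Measurable (B i))
    (hBind : ProbabilityTheory.iIndepFun B P)
    (hBval : ∀ i ω, B i ω = 0 ∨ B i ω = 1)
    (hBmean : ∀ i, P {ω | B i ω = 1} = ENNReal.ofReal (Φ i.1))
    (Φhat : A → Ω → ℝ)
    (hΦhat : ∀ y ω, Φhat y ω = (1 / (k : ℝ)) * ∑ j : Fin k, B (y, j) ω)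
    (εk : ℝ)
    (hεk : εk = Real.sqrt (Real.log (2 * (Fintype.card A : ℝ) / α) / (2 * (k : ℝ))))
    (hεΦ : εk < Φbar) :
    ENNReal.ofReal (1 - α) ≤
      P {ω | (∀ y, |Φhat y ω - Φ y| ≤ εk) ∧
             (Zp * (Φbar - εk) ≤ ∑ y, p y * Φhat y ω ∧ 0 < Zp * (Φbar - εk)) ∧
             (1/2) * ∑ y, |p y * Φhat y ω / (∑ d, p d * Φhat d ω) - p y * Φ y / Zs|
               ≤ εk / (Φbar - εk)} :=
  stmt16_general P p Φ Zp Zs Φbar hp hZp hZppos hΦ hZs hΦbar k hk α hα0 hα1 B hBmeas hBind hBval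
    hBmean Φhat hΦhat εk hεk hεΦ
end
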